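/- arXiv:0711.3642 — 2 statements merged into one kernel-verified Lean document; each statement's English description precedes it below -/
import Mathlib

section
/- Let 𝔇 = (B, d, Δ_d, ε_d) and 𝔠 = (A, c, Δ_c, ε_c) be comonads in a 2-category ℬ. A pair (q, α) with q : B ⟶ A and α : d ∘ q ⟶ q ∘ c is a right comonad-morphism from 𝔇 to 𝔠 (i.e., α is compatible with the comultiplications and counits) if and only if d ∘ q carries the structure of a 𝔇-𝔠-bicomodule, with left 𝔇-coaction Δ_d ▷ q and right 𝔠-coaction (d ◁ α) ∘ (Δ_d ▷ q). -/
open CategoryTheory CategoryTheory.Limits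

universe w v u

variable {𝒷 : Type u} [Bicategory.{w, v} 𝒷]

section

local infixr:81 " ◁ " => Bicategory.whiskerLeft
local infixl:81 " ▷ " => Bicategory.whiskerRight
local notation "α_" => Bicategory.associator
local notation "λ_" => Bicategory.leftUnitor
local notation "ρ_" => Bicategory.rightUnitor

/-- A comonad in a bicategory `𝒷`, consisting of a 0-cell `a`, a 1-cell `c : a ⟶ a`
and 2-cells `Δ : c ⟶ c ≫ c`, `ε : c ⟶ 𝟙 a` satisfying the coassociativity and
counit axioms (up to the associator and unitors). -/
structure Cmnd (a : 𝒷) where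
  c : a ⟶ a
  Δ : c ⟶ c ≫ c
  ε : c ⟶ 𝟙 a
  coassoc : Δ ≫ Δ ▷ c ≫ (α_ c c c).hom = Δ ≫ c ◁ Δ
  counit_left : Δ ≫ ε ▷ c ≫ (λ_ c).hom = 𝟙 c
  counit_right : Δ ≫ c ◁ ε ≫ (ρ_ c).hom = 𝟙 c

end

open CategoryTheory.Bicategory

/-- A right comonad-morphism `(q, α)` from the comonad `D` (over `b`) to the comonad `C`
(over `a`): `α : d ≫ q ⟶ q ≫ c` is compatible with the comultiplications and counits. -/
def IsRightComonadMorphism {a b : 𝒷} (D : Cmnd b) (C : Cmnd a)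
    (q : b ⟶ a) (α : D.c ≫ q ⟶ q ≫ C.c) : Prop :=
  (α ≫ q ◁ C.Δ ≫ (α_ q C.c C.c).inv
      = D.Δ ▷ q ≫ (α_ D.c D.c q).hom ≫ D.c ◁ α ≫ (α_ D.c q C.c).inv ≫ α ▷ C.c) ∧
  (α ≫ q ◁ C.ε ≫ (ρ_ q).hom = D.ε ▷ q ≫ (λ_ q).hom)

/-- A left comonad-morphism `(p, β)` from the comonad `D` (over `b`) to the comonad `C`
(over `a`): `β : p ≫ d ⟶ c ≫ p` is compatible with the comultiplications and counits. -/
def IsLeftComonadMorphism {a b : 𝒷} (D : Cmnd b) (C : Cmnd a)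
    (p : a ⟶ b) (β : p ≫ D.c ⟶ C.c ≫ p) : Prop :=
  (p ◁ D.Δ ≫ (α_ p D.c D.c).inv ≫ β ▷ D.c ≫ (α_ C.c p D.c).hom ≫ C.c ◁ β ≫
      (α_ C.c C.c p).inv = β ≫ C.Δ ▷ p) ∧
  (β ≫ C.ε ▷ p ≫ (λ_ p).hom = p ◁ D.ε ≫ (ρ_ p).hom)

/-- `m : b ⟶ a` together with a left `D`-coaction `lam` and a right `C`-coaction `rho`
is a `D`-`C`-bicomodule: both coactions are coassociative and counital and compatible. -/
def IsBicomodule {a b : 𝒷} (D : Cmnd b) (C : Cmnd a) (m : b ⟶ a)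
    (lam : m ⟶ D.c ≫ m) (rho : m ⟶ m ≫ C.c) : Prop :=
  (lam ≫ D.Δ ▷ m ≫ (α_ D.c D.c m).hom = lam ≫ D.c ◁ lam) ∧
  (lam ≫ D.ε ▷ m ≫ (λ_ m).hom = 𝟙 m) ∧
  (rho ≫ m ◁ C.Δ ≫ (α_ m C.c C.c).inv = rho ≫ rho ▷ C.c) ∧
  (rho ≫ m ◁ C.ε ≫ (ρ_ m).hom = 𝟙 m) ∧
  (rho ≫ lam ▷ C.c ≫ (α_ D.c m C.c).hom = lam ≫ D.c ◁ rho)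

/-!
`d ≫ q` with coaction `Δ_d ▷ q` is the cofree left `D`-comodule on `q`, so the left-coaction
axioms hold for any `q`, and every `X : d ≫ q ⟶ m` extends to the comodule map
`cofreeLift D X = (d ◁ X) ∘ (Δ_d ▷ q)`, from which `X` is recovered by applying `ε_d`.
The right coaction is `cofreeLift D α`, and both of its axioms are `cofreeLift` applied to the
corresponding axiom for `α`; injectivity of `cofreeLift` gives the converse.
-/

section Cofree

variable {a b : 𝒷} (D : Cmnd b)

def cofreeCoaction (q : b ⟶ a) : D.c ≫ q ⟶ D.c ≫ D.c ≫ q :=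
  D.Δ ▷ q ≫ (α_ D.c D.c q).hom

def cofreeLift {q m : b ⟶ a} (X : D.c ≫ q ⟶ m) : D.c ≫ q ⟶ D.c ≫ m :=
  cofreeCoaction D q ≫ D.c ◁ X

variable {D}

@[simp]
lemma cofreeLift_id (q : b ⟶ a) : cofreeLift D (𝟙 (D.c ≫ q)) = cofreeCoaction D q := by
  simp [cofreeLift]

lemma cofreeLift_counit {q m : b ⟶ a} (X : D.c ≫ q ⟶ m) :
    cofreeLift D X ≫ D.ε ▷ m ≫ (λ_ m).hom = X := by
  calc cofreeLift D X ≫ D.ε ▷ m ≫ (λ_ m).hom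
      = cofreeCoaction D q ≫ (D.c ◁ X ≫ D.ε ▷ m) ≫ (λ_ m).hom := by
        simp only [cofreeLift, Category.assoc]
    _ = (D.Δ ≫ D.ε ▷ D.c ≫ (λ_ D.c).hom) ▷ q ≫ X := by
        rw [whisker_exchange]; simp only [cofreeCoaction]; bicategory
    _ = X := by simp [D.counit_left]

lemma cofreeLift_injective {q m : b ⟶ a} :
    Function.Injective (cofreeLift D : (D.c ≫ q ⟶ m) → (D.c ≫ q ⟶ D.c ≫ m)) :=
  fun X Y h => by rw [← cofreeLift_counit X, h, cofreeLift_counit]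

lemma cofreeCoaction_counit (q : b ⟶ a) :
    cofreeCoaction D q ≫ D.ε ▷ (D.c ≫ q) ≫ (λ_ (D.c ≫ q)).hom = 𝟙 (D.c ≫ q) := by
  simpa using cofreeLift_counit (D := D) (𝟙 (D.c ≫ q))

lemma cofreeLift_counit_whiskerRight (q : b ⟶ a) :
    cofreeLift D (D.ε ▷ q ≫ (λ_ q).hom) = 𝟙 (D.c ≫ q) := by
  calc cofreeLift D (D.ε ▷ q ≫ (λ_ q).hom) = (D.Δ ≫ D.c ◁ D.ε ≫ (ρ_ D.c).hom) ▷ q := by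
        simp only [cofreeLift, cofreeCoaction]; bicategory
    _ = 𝟙 (D.c ≫ q) := by simp [D.counit_right]

lemma cofreeLift_comp_cofreeCoaction {q m : b ⟶ a} (X : D.c ≫ q ⟶ m) :
    cofreeLift D X ≫ cofreeCoaction D m = cofreeCoaction D q ≫ D.c ◁ cofreeLift D X := by
  calc cofreeLift D X ≫ cofreeCoaction D m
      = D.Δ ▷ q ≫ (α_ D.c D.c q).hom ≫ (D.c ◁ X ≫ D.Δ ▷ m) ≫ (α_ D.c D.c m).hom := by
        simp only [cofreeLift, cofreeCoaction, Category.assoc]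
    _ = (D.Δ ≫ D.Δ ▷ D.c ≫ (α_ D.c D.c D.c).hom) ▷ q ≫ (α_ D.c (D.c ≫ D.c) q).hom ≫
          D.c ◁ (α_ D.c D.c q).hom ≫ D.c ◁ D.c ◁ X := by
        rw [whisker_exchange]; bicategory
    _ = cofreeCoaction D q ≫ D.c ◁ cofreeLift D X := by
        rw [D.coassoc]; simp only [cofreeLift, cofreeCoaction]; bicategory

lemma cofreeCoaction_coassoc (q : b ⟶ a) :
    cofreeCoaction D q ≫ cofreeCoaction D (D.c ≫ q) =
      cofreeCoaction D q ≫ D.c ◁ cofreeCoaction D q := by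
  simpa using cofreeLift_comp_cofreeCoaction (D := D) (𝟙 (D.c ≫ q))

end Cofree

section RightCoaction

variable {a b : 𝒷} {D : Cmnd b} {C : Cmnd a} {q : b ⟶ a}

def cofreeRightCoaction (D : Cmnd b) {c : a ⟶ a} (α : D.c ≫ q ⟶ q ≫ c) :
    D.c ≫ q ⟶ (D.c ≫ q) ≫ c :=
  cofreeLift D α ≫ (α_ D.c q c).inv

lemma cofreeRightCoaction_compatible {c : a ⟶ a} (α : D.c ≫ q ⟶ q ≫ c) :
    cofreeRightCoaction D α ≫ cofreeCoaction D q ▷ c ≫ (α_ D.c (D.c ≫ q) c).hom =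
      cofreeCoaction D q ≫ D.c ◁ cofreeRightCoaction D α := by
  calc cofreeRightCoaction D α ≫ cofreeCoaction D q ▷ c ≫ (α_ D.c (D.c ≫ q) c).hom
      = cofreeLift D α ≫ cofreeCoaction D (q ≫ c) ≫ D.c ◁ (α_ D.c q c).inv := by
        simp only [cofreeRightCoaction, cofreeCoaction]; bicategory
    _ = cofreeCoaction D q ≫ D.c ◁ cofreeRightCoaction D α := by
        rw [← Category.assoc, cofreeLift_comp_cofreeCoaction]
        simp [cofreeRightCoaction]

lemma cofreeRightCoaction_coassoc_iff (α : D.c ≫ q ⟶ q ≫ C.c) :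
    cofreeRightCoaction D α ≫ (D.c ≫ q) ◁ C.Δ ≫ (α_ (D.c ≫ q) C.c C.c).inv =
        cofreeRightCoaction D α ≫ cofreeRightCoaction D α ▷ C.c ↔
      α ≫ q ◁ C.Δ ≫ (α_ q C.c C.c).inv = cofreeRightCoaction D α ≫ α ▷ C.c := by
  have hΔ : cofreeRightCoaction D α ≫ (D.c ≫ q) ◁ C.Δ ≫ (α_ (D.c ≫ q) C.c C.c).inv =
      cofreeLift D (α ≫ q ◁ C.Δ ≫ (α_ q C.c C.c).inv) ≫
        (α_ D.c (q ≫ C.c) C.c).inv ≫ (α_ D.c q C.c).inv ▷ C.c := by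
    simp only [cofreeRightCoaction, cofreeLift, cofreeCoaction]; bicategory
  have hsq : cofreeRightCoaction D α ≫ cofreeRightCoaction D α ▷ C.c =
      cofreeLift D (cofreeRightCoaction D α ≫ α ▷ C.c) ≫
        (α_ D.c (q ≫ C.c) C.c).inv ≫ (α_ D.c q C.c).inv ▷ C.c := by
    calc cofreeRightCoaction D α ≫ cofreeRightCoaction D α ▷ C.c
        = (cofreeRightCoaction D α ≫ cofreeCoaction D q ▷ C.c ≫ (α_ D.c (D.c ≫ q) C.c).hom) ≫
            (α_ D.c (D.c ≫ q) C.c).inv ≫ (D.c ◁ α) ▷ C.c ≫ (α_ D.c q C.c).inv ▷ C.c := by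
          simp [cofreeRightCoaction, cofreeLift]
      _ = cofreeLift D (cofreeRightCoaction D α ≫ α ▷ C.c) ≫
            (α_ D.c (q ≫ C.c) C.c).inv ≫ (α_ D.c q C.c).inv ▷ C.c := by
          rw [cofreeRightCoaction_compatible]; simp only [cofreeLift]; bicategory
  rw [hΔ, hsq, cancel_mono, cofreeLift_injective.eq_iff]

lemma cofreeRightCoaction_counit_iff (α : D.c ≫ q ⟶ q ≫ C.c) :
    cofreeRightCoaction D α ≫ (D.c ≫ q) ◁ C.ε ≫ (ρ_ (D.c ≫ q)).hom = 𝟙 (D.c ≫ q) ↔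
      α ≫ q ◁ C.ε ≫ (ρ_ q).hom = D.ε ▷ q ≫ (λ_ q).hom := by
  have hε : cofreeRightCoaction D α ≫ (D.c ≫ q) ◁ C.ε ≫ (ρ_ (D.c ≫ q)).hom =
      cofreeLift D (α ≫ q ◁ C.ε ≫ (ρ_ q).hom) := by
    simp only [cofreeRightCoaction, cofreeLift, cofreeCoaction]; bicategory
  rw [hε, ← cofreeLift_counit_whiskerRight, cofreeLift_injective.eq_iff]

end RightCoaction

/-- `(q, α)` is a right comonad-morphism from `D` to `C` if and only if `d ≫ q` is a
`D`-`C`-bicomodule, with left `D`-coaction `Δ_d ▷ q` (followed by the associator) and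
right `C`-coaction `(d ◁ α) ∘ (Δ_d ▷ q)` (with associators inserted). -/
theorem isRightComonadMorphism_iff_isBicomodule {a b : 𝒷} (D : Cmnd b) (C : Cmnd a)
    (q : b ⟶ a) (α : D.c ≫ q ⟶ q ≫ C.c) :
    IsRightComonadMorphism D C q α ↔
      IsBicomodule D C (D.c ≫ q)
        (D.Δ ▷ q ≫ (α_ D.c D.c q).hom)
        (D.Δ ▷ q ≫ (α_ D.c D.c q).hom ≫ D.c ◁ α ≫ (α_ D.c q C.c).inv) := by
  have hρ : D.Δ ▷ q ≫ (α_ D.c D.c q).hom ≫ D.c ◁ α ≫ (α_ D.c q C.c).inv =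
      cofreeRightCoaction D α := by
    simp [cofreeRightCoaction, cofreeLift, cofreeCoaction]
  have hΔ : D.Δ ▷ q ≫ (α_ D.c D.c q).hom ≫ D.c ◁ α ≫ (α_ D.c q C.c).inv ≫ α ▷ C.c =
      cofreeRightCoaction D α ≫ α ▷ C.c := by
    simp [cofreeRightCoaction, cofreeLift, cofreeCoaction]
  rw [IsRightComonadMorphism, IsBicomodule, hρ, hΔ, ← cofreeRightCoaction_coassoc_iff,
    ← cofreeRightCoaction_counit_iff]
  exact ⟨fun h => ⟨cofreeCoaction_coassoc q, cofreeCoaction_counit q, h.1, h.2,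
      cofreeRightCoaction_compatible α⟩, fun h => ⟨h.2.2.1, h.2.2.2.1⟩⟩
end

section
/- Let F ⊣ G with F : 𝒜 → ℬ, G : ℬ → 𝒜, and H ⊣ K with H : ℬ → 𝒞, K : 𝒞 → ℬ, and Z : ℬ → 𝒟 a functor. Then: (i) if F is separable (the unit η of F ⊣ G is a split natural monomorphism) and H is G-separable (there is a natural ν : GKH → G with ν ∘ Gζ = id_G, where ζ is the unit of H ⊣ K), then the composite HF is separable; (ii) if H is Z-separable, then HF is ZF-separable. -/
open CategoryTheory

universe v₁ v₂ v₃ v₄ u₁ u₂ u₃ u₄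

/-- `F` with right adjoint `G` is separable: the unit of the adjunction is split by a
natural transformation. -/
def SeparableAdj {𝒜 : Type u₁} [Category.{v₁} 𝒜] {ℬ : Type u₂} [Category.{v₂} ℬ]
    {F : 𝒜 ⥤ ℬ} {G : ℬ ⥤ 𝒜} (adj : F ⊣ G) : Prop :=
  ∃ μ : F ⋙ G ⟶ 𝟭 𝒜, adj.unit ≫ μ = 𝟙 (𝟭 𝒜)

/-- `F` (with right adjoint `G`, unit `η`) is `W`-separable (separable of the second
kind): there is a natural transformation `ν : (F ⋙ G) ⋙ W ⟶ W` with `ν ∘ Wη = id`. -/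
def HSeparableAdj {𝒜 : Type u₁} [Category.{v₁} 𝒜] {ℬ : Type u₂} [Category.{v₂} ℬ]
    {𝒞 : Type u₃} [Category.{v₃} 𝒞]
    {F : 𝒜 ⥤ ℬ} {G : ℬ ⥤ 𝒜} (adj : F ⊣ G) (W : 𝒜 ⥤ 𝒞) : Prop :=
  ∃ ν : (F ⋙ G) ⋙ W ⟶ W, Functor.whiskerRight adj.unit W ≫ ν = W.leftUnitor.hom

/-!
For (ii), whiskering the splitting `ν` of `Zζ` by `F` and precomposing with `Z` applied to the
counit of `F ⊣ G` splits `Z` of the composite unit `Gζ_F ∘ η`. Part (i) is then (ii) for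
`Z = G`: the separability of `F` makes the identity functor a natural retract of `GF`, and
relative separability passes to natural retracts, so `HF` is `𝟭`-separable, i.e. separable.
-/

section

variable {𝒜 : Type u₁} [Category.{v₁} 𝒜] {ℬ : Type u₂} [Category.{v₂} ℬ]
  {𝒞 : Type u₃} [Category.{v₃} 𝒞] {𝒟 : Type u₄} [Category.{v₄} 𝒟]
  {L : 𝒜 ⥤ ℬ} {R : ℬ ⥤ 𝒜} {adj : L ⊣ R}

theorem hSeparableAdj_iff_app (W : 𝒜 ⥤ 𝒞) :
    HSeparableAdj adj W ↔
      ∃ ν : (L ⋙ R) ⋙ W ⟶ W, ∀ a, W.map (adj.unit.app a) ≫ ν.app a = 𝟙 (W.obj a) := by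
  refine exists_congr fun ν => ⟨fun h a => ?_, fun h => ?_⟩
  · simpa using congrArg (fun t => t.app a) h
  · ext a
    simpa using h a

theorem SeparableAdj.of_hSeparableAdj_id (h : HSeparableAdj adj (𝟭 𝒜)) : SeparableAdj adj := by
  obtain ⟨ν, hν⟩ := (hSeparableAdj_iff_app _).1 h
  exact ⟨ν, by ext a; simpa using hν a⟩

theorem HSeparableAdj.of_retract {W W' : 𝒜 ⥤ 𝒞} (h : HSeparableAdj adj W)
    (i : W' ⟶ W) (r : W ⟶ W') (hir : i ≫ r = 𝟙 W') : HSeparableAdj adj W' := by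
  obtain ⟨ν, hν⟩ := (hSeparableAdj_iff_app W).1 h
  refine (hSeparableAdj_iff_app W').2
    ⟨Functor.whiskerLeft (L ⋙ R) i ≫ ν ≫ r, fun a => ?_⟩
  simp only [NatTrans.comp_app, Functor.whiskerLeft_app, Functor.comp_obj]
  rw [i.naturality_assoc, reassoc_of% hν a]
  simpa using NatTrans.congr_app hir a

/-- Naturality of `ε` turns `ZFGζ_F ≫ Zε_{KHF}` into `Zε_F ≫ Zζ_F`, and the triangle identity
`Fη ≫ ε_F = 𝟙` absorbs the rest of the composite unit. -/
theorem HSeparableAdj.comp_left {F : 𝒜 ⥤ ℬ} {G : ℬ ⥤ 𝒜} (adj₁ : F ⊣ G)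
    {H : ℬ ⥤ 𝒞} {K : 𝒞 ⥤ ℬ} {adj₂ : H ⊣ K} {Z : ℬ ⥤ 𝒟} (h : HSeparableAdj adj₂ Z) :
    HSeparableAdj (adj₁.comp adj₂) (F ⋙ Z) := by
  obtain ⟨ν, hν⟩ := (hSeparableAdj_iff_app Z).1 h
  refine (hSeparableAdj_iff_app (F ⋙ Z)).2
    ⟨Functor.whiskerRight (Functor.whiskerLeft (F ⋙ H ⋙ K) adj₁.counit) Z ≫
      Functor.whiskerLeft F ν, fun a => ?_⟩
  have hε := adj₁.counit.naturality (adj₂.unit.app (F.obj a))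
  simp only [Functor.comp_obj, Functor.id_obj, Functor.comp_map, Functor.id_map] at hε
  simp only [Functor.comp_obj, Functor.comp_map, Adjunction.comp_unit_app, NatTrans.comp_app,
    Functor.whiskerRight_app, Functor.whiskerLeft_app, F.map_comp, Z.map_comp, Category.assoc]
  rw [← Z.map_comp_assoc (F.map (G.map _)), hε, Z.map_comp_assoc, ← Z.map_comp_assoc (F.map _),
    adj₁.left_triangle_components a]
  simpa using hν (F.obj a)

end

/-- Composition of (relative) separable functors: given adjunctions `F ⊣ G` and
`H ⊣ K` and a functor `Z : ℬ ⥤ 𝒟`, (i) if `F` is separable and `H` is `G`-separable,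
then the composite `F ⋙ H` (with right adjoint `K ⋙ G`) is separable; (ii) if `H` is
`Z`-separable, then `F ⋙ H` is `ZF`-separable. -/
theorem separable_comp {𝒜 : Type u₁} [Category.{v₁} 𝒜] {ℬ : Type u₂} [Category.{v₂} ℬ]
    {𝒞 : Type u₃} [Category.{v₃} 𝒞] {𝒟 : Type u₄} [Category.{v₄} 𝒟]
    (F : 𝒜 ⥤ ℬ) (G : ℬ ⥤ 𝒜) (adj₁ : F ⊣ G)
    (H : ℬ ⥤ 𝒞) (K : 𝒞 ⥤ ℬ) (adj₂ : H ⊣ K) (Z : ℬ ⥤ 𝒟) :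
    (SeparableAdj adj₁ → HSeparableAdj adj₂ G → SeparableAdj (adj₁.comp adj₂)) ∧
    (HSeparableAdj adj₂ Z → HSeparableAdj (adj₁.comp adj₂) (F ⋙ Z)) := by
  refine ⟨fun ⟨μ, hμ⟩ hH => ?_, HSeparableAdj.comp_left adj₁⟩
  exact SeparableAdj.of_hSeparableAdj_id
    ((hH.comp_left adj₁).of_retract adj₁.unit μ hμ)
end
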